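/- The converse of the previous implication fails: let Σ = {b,c} and L = {(σ,τ) ∈ TΣ^ω : there exists k ≥ 1 with σ_k = b and τ_k ≥ 5} (the language of F_{≥5} b). For the finite timed word ρ = (c, 6): D^ρ_L = 0 and D^ρ_{L̄} = +∞ (so V_T(L)(ρ) = (0,+∞)), yet V_D(L)(ρ) = ? (there is a divergent extension of ρ in L and a divergent extension of ρ outside L). -/

import Mathlib

open Filter

/-! ## Timed words -/

/-- An infinite timed word: a symbol sequence and a timestamp sequence (positions 0,1,2,…
correspond to the paper's positions 1,2,3,…; the convention τ₀ = 0 is used in definitions). -/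
abbrev InfTW (α : Type) := (ℕ → α) × (ℕ → ℝ)

/-- `ρ` is a genuine infinite timed word: timestamps are strictly increasing
non-negative reals (strictly above the conventional τ₀ = 0). -/
def IsInfTW {α : Type} (ρ : InfTW α) : Prop := 0 < ρ.2 0 ∧ StrictMono ρ.2

/-- Time divergent infinite timed words. -/
def IsDivergent {α : Type} (ρ : InfTW α) : Prop := IsInfTW ρ ∧ Tendsto ρ.2 atTop atTop

/-- A finite timed word with `len + 1` letters, at positions `0,…,len`. -/
structure FinTW (α : Type) where
  len : ℕ
  sym : ℕ → α
  time : ℕ → ℝ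

/-- `ρ` is a genuine finite timed word: `0 < τ₁ < … < τ_n`. -/
def IsFinTW {α : Type} (ρ : FinTW α) : Prop :=
  0 < ρ.time 0 ∧ ∀ i < ρ.len, ρ.time i < ρ.time (i + 1)

/-- Duration of a finite timed word. -/
def FinTW.dur {α : Type} (ρ : FinTW α) : ℝ := ρ.time ρ.len

/-- Concatenation of a finite timed word with an infinite timed word
(timestamps of the suffix are shifted by the duration). -/
def FinTW.catInf {α : Type} (ρ : FinTW α) (μ : InfTW α) : InfTW α :=
  (fun i => if i ≤ ρ.len then ρ.sym i else μ.1 (i - ρ.len - 1),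
   fun i => if i ≤ ρ.len then ρ.time i else ρ.dur + μ.2 (i - ρ.len - 1))

/-- Concatenation of two finite timed words. -/
def FinTW.catFin {α : Type} (ρ ρ' : FinTW α) : FinTW α where
  len := ρ.len + 1 + ρ'.len
  sym := fun i => if i ≤ ρ.len then ρ.sym i else ρ'.sym (i - ρ.len - 1)
  time := fun i => if i ≤ ρ.len then ρ.time i else ρ.dur + ρ'.time (i - ρ.len - 1)

/-! ## Verdicts -/

inductive Verdict where
  | top
  | bot
  | unknown
deriving DecidableEq

open Classical in
/-- The verdict (no divergence assumption). -/
noncomputable def Vv {α : Type} (φ : Set (InfTW α)) (ρ : FinTW α) : Verdict :=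
  if ∀ μ, IsInfTW μ → ρ.catInf μ ∈ φ then .top
  else if ∀ μ, IsInfTW μ → ρ.catInf μ ∉ φ then .bot
  else .unknown

open Classical in
/-- The verdict under time divergence. -/
noncomputable def VD {α : Type} (φ : Set (InfTW α)) (ρ : FinTW α) : Verdict :=
  if ∀ μ, IsDivergent μ → ρ.catInf μ ∈ φ then .top
  else if ∀ μ, IsDivergent μ → ρ.catInf μ ∉ φ then .bot
  else .unknown

/-- `D^ρ_{φ̄}`: the infimum (in `[0,∞]`, inf ∅ = ∞) of durations of finite continuations
`ρ'` such that every divergent continuation of `ρ·ρ'` avoids `φ`. -/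
noncomputable def Dbar {α : Type} (φ : Set (InfTW α)) (ρ : FinTW α) : ENNReal :=
  sInf {c | ∃ ρ' : FinTW α, IsFinTW ρ' ∧
    (∀ μ, IsDivergent μ → (ρ.catFin ρ').catInf μ ∉ φ) ∧ c = ENNReal.ofReal ρ'.dur}

/-- `D^ρ_φ`: the infimum (in `[0,∞]`, inf ∅ = ∞) of durations of finite continuations
`ρ'` such that every divergent continuation of `ρ·ρ'` lies in `φ`. -/
noncomputable def Dphi {α : Type} (φ : Set (InfTW α)) (ρ : FinTW α) : ENNReal :=
  sInf {c | ∃ ρ' : FinTW α, IsFinTW ρ' ∧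
    (∀ μ, IsDivergent μ → (ρ.catFin ρ').catInf μ ∈ φ) ∧ c = ENNReal.ofReal ρ'.dur}

/-! ## Statement 18 -/

inductive BC where
  | b
  | c
deriving DecidableEq

/-- The language of `F_{≥5} b` over `{b,c}`. -/
def L5b : Set (InfTW BC) := {ρ | IsInfTW ρ ∧ ∃ k, ρ.1 k = .b ∧ (5 : ℝ) ≤ ρ.2 k}

/-- The finite timed word `(c,6)`. -/
def rho18 : FinTW BC := ⟨0, fun _ => .c, fun _ => 6⟩

/-! Since time diverges, a continuation that keeps emitting `b` eventually emits one at time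
`≥ 5`; so no finite extension of `(c,6)` forces leaving `F_{≥5} b`, and `D_{L̄} = ∞`. On the other
hand, a `b` appended after any delay `ε > 0` already occurs at time `6 + ε ≥ 5`, so `D_L = 0`.
Still the verdict is `?`: the all-`b` continuation is in `L`, the all-`c` one is not. -/

namespace FinTW

variable {α : Type}

def single (a : α) (t : ℝ) : FinTW α := ⟨0, fun _ => a, fun _ => t⟩

lemma isFinTW_single (a : α) {t : ℝ} (ht : 0 < t) : IsFinTW (single a t) :=
  ⟨ht, fun _ hi => absurd hi (Nat.not_lt_zero _)⟩

@[simp]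
lemma catInf_fst_len_add (ρ : FinTW α) (μ : InfTW α) (n : ℕ) :
    (ρ.catInf μ).1 (ρ.len + 1 + n) = μ.1 n := by
  simp only [catInf, if_neg (show ¬ρ.len + 1 + n ≤ ρ.len by omega),
    show ρ.len + 1 + n - ρ.len - 1 = n by omega]

@[simp]
lemma catInf_snd_len_add (ρ : FinTW α) (μ : InfTW α) (n : ℕ) :
    (ρ.catInf μ).2 (ρ.len + 1 + n) = ρ.dur + μ.2 n := by
  simp only [catInf, if_neg (show ¬ρ.len + 1 + n ≤ ρ.len by omega),
    show ρ.len + 1 + n - ρ.len - 1 = n by omega]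

end FinTW

def InfTW.const {α : Type} (a : α) : InfTW α := (fun _ => a, fun i => (i : ℝ) + 1)

lemma isDivergent_const {α : Type} (a : α) : IsDivergent (InfTW.const a) :=
  ⟨⟨by norm_num [InfTW.const], fun _ _ h => by simpa [InfTW.const] using h⟩,
    tendsto_atTop_add_const_right _ 1 tendsto_natCast_atTop_atTop⟩

section Concatenation

variable {α : Type} {ρ ρ' : FinTW α} {μ : InfTW α}

lemma IsFinTW.catInf (hρ : IsFinTW ρ) (hμ : IsInfTW μ) : IsInfTW (ρ.catInf μ) := by
  refine ⟨by simpa [FinTW.catInf] using hρ.1, strictMono_nat_of_lt_succ fun i => ?_⟩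
  simp only [FinTW.catInf]
  rcases lt_trichotomy i ρ.len with h | rfl | h
  · simpa [h.le, Nat.succ_le_of_lt h] using hρ.2 i h
  · simpa [FinTW.dur] using hμ.1
  · rw [if_neg (by omega), if_neg (by omega), show i + 1 - ρ.len - 1 = i - ρ.len - 1 + 1 by omega]
    exact add_lt_add_right (hμ.2 (Nat.lt_succ_self _)) _

lemma IsFinTW.catFin (hρ : IsFinTW ρ) (hρ' : IsFinTW ρ') : IsFinTW (ρ.catFin ρ') := by
  refine ⟨by simpa [FinTW.catFin] using hρ.1, fun i hi => ?_⟩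
  simp only [FinTW.catFin] at hi ⊢
  rcases lt_trichotomy i ρ.len with h | rfl | h
  · simpa [h.le, Nat.succ_le_of_lt h] using hρ.2 i h
  · simpa [FinTW.dur] using hρ'.1
  · rw [if_neg (by omega), if_neg (by omega), show i + 1 - ρ.len - 1 = i - ρ.len - 1 + 1 by omega]
    exact add_lt_add_right (hρ'.2 _ (by omega)) _

end Concatenation

section Verdicts

variable {α : Type} {φ : Set (InfTW α)} {ρ : FinTW α}

lemma Dphi_eq_zero (h : ∀ ε : ℝ, 0 < ε → ∃ ρ' : FinTW α, IsFinTW ρ' ∧ ρ'.dur ≤ ε ∧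
      ∀ μ, IsDivergent μ → (ρ.catFin ρ').catInf μ ∈ φ) :
    Dphi φ ρ = 0 := by
  refine le_antisymm (ENNReal.le_of_forall_pos_le_add fun ε hε _ => ?_) bot_le
  obtain ⟨ρ', hρ', hdur, hφ⟩ := h ε hε
  calc Dphi φ ρ ≤ ENNReal.ofReal ρ'.dur := sInf_le ⟨ρ', hρ', hφ, rfl⟩
    _ ≤ ENNReal.ofReal ε := ENNReal.ofReal_le_ofReal hdur
    _ = 0 + ε := by simp

lemma Dbar_eq_top
    (h : ∀ ρ', IsFinTW ρ' → ∃ μ, IsDivergent μ ∧ (ρ.catFin ρ').catInf μ ∈ φ) :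
    Dbar φ ρ = ⊤ := by
  rw [Dbar, sInf_eq_top]
  rintro _ ⟨ρ', hρ', hφ, -⟩
  obtain ⟨μ, hμ, hmem⟩ := h ρ' hρ'
  exact absurd hmem (hφ μ hμ)

lemma VD_eq_unknown (hin : ∃ μ, IsDivergent μ ∧ ρ.catInf μ ∈ φ)
    (hout : ∃ μ, IsDivergent μ ∧ ρ.catInf μ ∉ φ) :
    VD φ ρ = .unknown := by
  obtain ⟨μ, hμ, hmem⟩ := hin
  obtain ⟨ν, hν, hnot⟩ := hout
  rw [VD, if_neg fun h => hnot (h ν hν), if_neg fun h => h μ hμ hmem]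

end Verdicts

section FutureB

variable {ρ : FinTW BC}

lemma catInf_const_b_mem_L5b (hρ : IsFinTW ρ) : ρ.catInf (InfTW.const .b) ∈ L5b := by
  obtain ⟨n, hn⟩ := exists_nat_ge (5 - ρ.dur)
  refine ⟨hρ.catInf (isDivergent_const _).1, ρ.len + 1 + n,
    by simp only [FinTW.catInf_fst_len_add, InfTW.const], ?_⟩
  simp only [FinTW.catInf_snd_len_add, InfTW.const]
  linarith

lemma catInf_catFin_single_b_mem_L5b (hρ : IsFinTW ρ) (h5 : 5 ≤ ρ.dur) {t : ℝ} (ht : 0 < t)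
    {μ : InfTW BC} (hμ : IsInfTW μ) : (ρ.catFin (FinTW.single .b t)).catInf μ ∈ L5b := by
  refine ⟨(hρ.catFin (FinTW.isFinTW_single _ ht)).catInf hμ, ρ.len + 1, ?_, ?_⟩
  · simp [FinTW.catInf, FinTW.catFin, FinTW.single]
  · have htime : ((ρ.catFin (FinTW.single .b t)).catInf μ).2 (ρ.len + 1) = ρ.dur + t := by
      simp [FinTW.catInf, FinTW.catFin, FinTW.single]
    rw [htime]
    linarith

end FutureB

lemma rho18_catInf_const_c_not_mem_L5b : rho18.catInf (InfTW.const .c) ∉ L5b := by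
  rintro ⟨-, k, hk, -⟩
  simp [FinTW.catInf, rho18, InfTW.const] at hk

theorem stmt18 :
    Dphi L5b rho18 = 0 ∧ Dbar L5b rho18 = ⊤ ∧ VD L5b rho18 = .unknown ∧
    (∃ μ : InfTW BC, IsDivergent μ ∧ rho18.catInf μ ∈ L5b) ∧
    (∃ μ : InfTW BC, IsDivergent μ ∧ rho18.catInf μ ∉ L5b) := by
  have hρ : IsFinTW rho18 := FinTW.isFinTW_single BC.c (t := 6) (by norm_num)
  have hin : ∃ μ, IsDivergent μ ∧ rho18.catInf μ ∈ L5b :=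
    ⟨_, isDivergent_const .b, catInf_const_b_mem_L5b hρ⟩
  have hout : ∃ μ, IsDivergent μ ∧ rho18.catInf μ ∉ L5b :=
    ⟨_, isDivergent_const .c, rho18_catInf_const_c_not_mem_L5b⟩
  refine ⟨Dphi_eq_zero fun ε hε => ⟨_, FinTW.isFinTW_single .b hε, le_rfl, fun μ hμ => ?_⟩,
    Dbar_eq_top fun ρ' hρ' => ⟨_, isDivergent_const .b, catInf_const_b_mem_L5b (hρ.catFin hρ')⟩,
    VD_eq_unknown hin hout, hin, hout⟩
  exact catInf_catFin_single_b_mem_L5b hρ (by norm_num [rho18, FinTW.dur]) hε hμ.1
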